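/- Let A be a sequence of n distinct integers between 1 and n whose permutation graph G_A is bipartite, and let I and J be maximum feasible sets for A such that the instance (A, I, J) has no forbidden pairs. Let a_i and a_j be the two elements of the leftmost mixed pile P_t, with i ∈ I and j ∈ J. Then at least one of (I \ {i}) ∪ {j} and (J \ {j}) ∪ {i} is a feasible set for A. -/

import Mathlib

/-- One step of patience sorting: place index `i` (with value `a i`) on the
leftmost pile whose current top element is greater than `a i`, or start a
new pile at the right end if no such pile exists.  Each pile is a list of
indices with the head being the top (most recently placed) element. -/
def place (a : ℕ → ℕ) : List (List ℕ) → ℕ → List (List ℕ)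
  | [], i => [[i]]
  | p :: ps, i => if a i < a p.headI then (i :: p) :: ps else p :: place a ps i

/-- The (nonempty) piles obtained by patience sorting, processing the values
`a i` for `i ∈ idxs` in order. -/
def pilesOf (a : ℕ → ℕ) (idxs : List ℕ) : List (List ℕ) :=
  idxs.foldl (place a) []

/-- `I` is the index set of an increasing subsequence of `a`. -/
def Feasible (a : ℕ → ℕ) (I : Finset ℕ) : Prop :=
  ∀ i ∈ I, ∀ j ∈ I, i < j → a i < a j

/-- The permutation graph of the sequence `a₁, …, aₙ`: vertices are the
indices `1, …, n`, and `i < j` are adjacent iff `a i > a j`. -/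
def permGraph (a : ℕ → ℕ) (n : ℕ) : SimpleGraph ℕ where
  Adj i j := i ∈ Finset.Icc 1 n ∧ j ∈ Finset.Icc 1 n ∧
    ((i < j ∧ a j < a i) ∨ (j < i ∧ a i < a j))
  symm := by
    constructor
    intro i j ⟨hi, hj, h⟩
    exact ⟨hj, hi, h.symm⟩
  loopless := by
    constructor
    intro i ⟨_, _, h⟩
    rcases h with ⟨h, _⟩ | ⟨h, _⟩ <;> exact lt_irrefl i h

/-- A maximum feasible set for `a₁, …, aₙ`: a feasible subset of the index
set `{1, …, n}` of largest cardinality (equivalently, a maximum independent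
set of the permutation graph). -/
def MaxFeasibleIcc (a : ℕ → ℕ) (n : ℕ) (I : Finset ℕ) : Prop :=
  I ⊆ Finset.Icc 1 n ∧ Feasible a I ∧
    ∀ J ⊆ Finset.Icc 1 n, Feasible a J → J.card ≤ I.card

/-- With respect to maximum feasible sets `I` and `J`, a pile is *mixed* if it
contains exactly two elements `a i` and `a j` with `i ∈ I` and `j ∈ J`
(and `i ≠ j`). -/
def MixedPile (I J : Finset ℕ) (p : List ℕ) : Prop :=
  p.length = 2 ∧ ∃ i j : ℕ, i ≠ j ∧ i ∈ p ∧ j ∈ p ∧ i ∈ I ∧ j ∈ J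

/-- The instance `(A, I, J)` has a *forbidden pair*: two distinct mixed piles
whose four vertices induce a cycle of length `4` in the permutation graph. -/
def HasForbiddenPair (a : ℕ → ℕ) (n : ℕ) (I J : Finset ℕ) : Prop :=
  ∃ t t' : ℕ, t ≠ t' ∧ ∃ p p' : List ℕ,
    (pilesOf a ((List.range n).map (· + 1)))[t]? = some p ∧
    (pilesOf a ((List.range n).map (· + 1)))[t']? = some p' ∧
    ∃ i j i' j' : ℕ,
      (i ≠ j ∧ i ∈ p ∧ j ∈ p ∧ i ∈ I ∧ j ∈ J ∧ p.length = 2) ∧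
      (i' ≠ j' ∧ i' ∈ p' ∧ j' ∈ p' ∧ i' ∈ I ∧ j' ∈ J ∧ p'.length = 2) ∧
      -- the four vertices are distinct and induce a 4-cycle i - j - i' - j' - i
      i ≠ i' ∧ j ≠ j' ∧
      (permGraph a n).Adj i j ∧ (permGraph a n).Adj j i' ∧
      (permGraph a n).Adj i' j' ∧ (permGraph a n).Adj j' i ∧
      ¬ (permGraph a n).Adj i i' ∧ ¬ (permGraph a n).Adj j j'


/-!
Patience sorting puts every element on a pile to the right of an earlier, smaller element
of each preceding pile, and any two elements of one pile form an inversion.  So a feasible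
set meets each pile at most once, the last pile starts an increasing chain through all
piles, and a maximum feasible set meets every pile exactly once; by bipartiteness no pile
has more than two elements.

Say `i < j`, so `a j < a i`.  If both exchanges fail, there are `k ∈ I \ J` inverted with
`j` and `l ∈ J \ I` inverted with `i`.  Their piles lie to the right of `P_t` (a pile to the
left holding `k` or `l` would be mixed), and the links back into `P_t = {i, j}` force
`i < k < j < l` and `a j < a l < a i < a k`.  If `k` and `l` share a pile, it forms a
forbidden pair with `P_t`; otherwise the partners `k' ∈ J` of `k` and `l' ∈ I` of `l` give a
forbidden pair among `P_t` and the piles of `k` and `l`, depending on how `a k'` compares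
with `a i` and `l'` with `j`.
-/

def IsInversion (a : ℕ → ℕ) (x y : ℕ) : Prop :=
  (x < y ∧ a y < a x) ∨ (y < x ∧ a x < a y)

lemma isInversion_comm {a : ℕ → ℕ} {x y : ℕ} : IsInversion a x y ↔ IsInversion a y x :=
  or_comm

namespace Feasible

variable {a : ℕ → ℕ} {I : Finset ℕ}

lemma mono (hI : Feasible a I) {I' : Finset ℕ} (h : I' ⊆ I) : Feasible a I' :=
  fun x hx y hy => hI x (h hx) y (h hy)

lemma not_isInversion (hI : Feasible a I) {x y : ℕ} (hx : x ∈ I) (hy : y ∈ I) :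
    ¬ IsInversion a x y := by
  have := hI x hx y hy
  have := hI y hy x hx
  unfold IsInversion
  omega

lemma insert_of_lt (hI : Feasible a I) {x : ℕ} (hx : ∀ y ∈ I, y < x ∧ a y < a x) :
    Feasible a (insert x I) := by
  intro u hu v hv huv
  rw [Finset.mem_insert] at hu hv
  rcases hu with rfl | hu <;> rcases hv with rfl | hv
  · omega
  · have := hx v hv; omega
  · exact (hx u hu).2
  · exact hI u hu v hv huv

lemma exists_isInversion_of_not_insert (hI : Feasible a I) {x : ℕ}
    (hinj : ∀ y ∈ I, a y = a x → y = x) (h : ¬ Feasible a (insert x I)) :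
    ∃ y ∈ I, IsInversion a x y := by
  simp only [Feasible, Finset.mem_insert] at h
  push Not at h
  obtain ⟨u, hu, v, hv, huv, hle⟩ := h
  rcases hu with rfl | hu <;> rcases hv with rfl | hv
  · omega
  · have := hinj v hv
    exact ⟨v, hv, Or.inl ⟨huv, by omega⟩⟩
  · have := hinj u hu
    exact ⟨u, hu, Or.inr ⟨huv, by omega⟩⟩
  · exact absurd (hI u hu v hv huv) (not_lt.2 hle)

end Feasible

lemma List.Pairwise.rel_of_getElem? {α : Type*} {R : α → α → Prop} {l : List α}
    (h : l.Pairwise R) {s s' : ℕ} {x y : α} (hs : l[s]? = some x) (hs' : l[s']? = some y)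
    (hlt : s < s') : R x y := by
  rw [List.getElem?_eq_some_iff] at hs hs'
  obtain ⟨hs, rfl⟩ := hs
  obtain ⟨hs', rfl⟩ := hs'
  exact List.pairwise_iff_getElem.1 h s s' hs hs' hlt

lemma List.eq_or_eq_of_length_eq_two {α : Type*} {l : List α} (hl : l.length = 2)
    {x y z : α} (hxy : x ≠ y) (hx : x ∈ l) (hy : y ∈ l) (hz : z ∈ l) : z = x ∨ z = y := by
  obtain ⟨b, c, rfl⟩ := List.length_eq_two.1 hl
  simp only [List.mem_cons, List.not_mem_nil, or_false] at hx hy hz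
  grind

section PatienceSorting

variable {a : ℕ → ℕ}

lemma flatten_place_perm (ps : List (List ℕ)) (x : ℕ) :
    (place a ps x).flatten.Perm (x :: ps.flatten) := by
  induction ps with
  | nil => simp [place]
  | cons p ps ih =>
    unfold place
    split_ifs
    · simp
    · simpa using (ih.append_left p).trans List.perm_middle

lemma flatten_pilesOf_perm (idxs : List ℕ) : (pilesOf a idxs).flatten.Perm idxs := by
  suffices ∀ ps, (idxs.foldl (place a) ps).flatten.Perm (ps.flatten ++ idxs) by
    simpa [pilesOf] using this []
  induction idxs with
  | nil => simp
  | cons x xs ih =>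
    intro ps
    exact (ih _).trans (((flatten_place_perm ps x).append_right xs).trans List.perm_middle.symm)

/-- `back`: every element has, in each pile to its left, an earlier element of smaller value
(the top of that pile when the element was placed). -/
structure PilesInv (a : ℕ → ℕ) (ps : List (List ℕ)) : Prop where
  ne_nil : ∀ q ∈ ps, q ≠ []
  chain : ∀ q ∈ ps, q.Pairwise (fun x y => y < x ∧ a x < a y)
  back : ps.Pairwise (fun q q' => ∀ x ∈ q', ∃ y ∈ q, y < x ∧ a y < a x)

lemma PilesInv.of_cons {p : List ℕ} {ps : List (List ℕ)} (h : PilesInv a (p :: ps)) :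
    PilesInv a ps :=
  ⟨fun q hq => h.ne_nil q (List.mem_cons_of_mem p hq),
    fun q hq => h.chain q (List.mem_cons_of_mem p hq), (List.pairwise_cons.1 h.back).2⟩

lemma PilesInv.place {ps : List (List ℕ)} {x : ℕ} (h : PilesInv a ps)
    (hlt : ∀ y ∈ ps.flatten, y < x) (hne : ∀ y ∈ ps.flatten, a y ≠ a x) :
    PilesInv a (place a ps x) := by
  induction ps with
  | nil => exact ⟨by simp [_root_.place], by simp [_root_.place], by simp [_root_.place]⟩
  | cons p ps ih =>
    obtain ⟨b, p, rfl⟩ := List.exists_cons_of_ne_nil (h.ne_nil _ List.mem_cons_self)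
    have hpc := h.chain _ List.mem_cons_self
    obtain ⟨hback, htail⟩ := List.pairwise_cons.1 h.back
    have hlt' : ∀ y ∈ b :: p, y < x :=
      fun y hy => hlt y (List.mem_flatten_of_mem List.mem_cons_self hy)
    unfold _root_.place
    split_ifs with hx
    · refine ⟨?_, ?_, ?_⟩
      · simpa using fun q hq => h.ne_nil q (List.mem_cons_of_mem _ hq)
      · intro q hq
        rcases List.mem_cons.1 hq with rfl | hq
        · refine List.pairwise_cons.2 ⟨fun y hy => ⟨hlt' y hy, hx.trans_le ?_⟩, hpc⟩
          rcases List.mem_cons.1 hy with rfl | hy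
          · exact le_rfl
          · exact ((List.pairwise_cons.1 hpc).1 y hy).2.le
        · exact h.chain q (List.mem_cons_of_mem _ hq)
      · refine List.pairwise_cons.2 ⟨fun q hq z hz => ?_, htail⟩
        obtain ⟨y, hy, hyz⟩ := hback q hq z hz
        exact ⟨y, List.mem_cons_of_mem x hy, hyz⟩
    · have ih := ih h.of_cons (fun y hy => hlt y (by simp_all))
        (fun y hy => hne y (by simp_all))
      refine ⟨?_, ?_, List.pairwise_cons.2 ⟨fun q hq z hz => ?_, ih.back⟩⟩
      · simpa using ih.ne_nil
      · simpa [hpc] using ih.chain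
      rcases List.mem_cons.1
        ((flatten_place_perm ps x).mem_iff.1 (List.mem_flatten_of_mem hq hz)) with rfl | hz
      · have := hne b (by simp)
        exact ⟨b, List.mem_cons_self, hlt' b List.mem_cons_self, by simp at hx; omega⟩
      · obtain ⟨q', hq', hzq'⟩ := List.mem_flatten.1 hz
        exact hback q' hq' z hzq'

lemma pilesInv_pilesOf {idxs : List ℕ} (hs : idxs.Pairwise (· < ·))
    (hinj : Set.InjOn a {x | x ∈ idxs}) : PilesInv a (pilesOf a idxs) := by
  induction idxs using List.reverseRecOn with
  | nil => exact ⟨by simp [pilesOf], by simp [pilesOf], by simp [pilesOf]⟩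
  | append_singleton l x ih =>
    rw [List.pairwise_append] at hs
    have hperm := flatten_pilesOf_perm (a := a) l
    have hlt : ∀ y ∈ (pilesOf a l).flatten, y < x :=
      fun y hy => hs.2.2 y (hperm.subset hy) x (List.mem_singleton_self x)
    rw [pilesOf, List.foldl_append, List.foldl_cons, List.foldl_nil]
    refine (ih hs.1 (hinj.mono fun y hy => List.mem_append_left _ hy)).place hlt
      fun y hy hxy => (hlt y hy).ne (hinj (List.mem_append_left _ (hperm.subset hy))
        (List.mem_append_right _ (List.mem_singleton_self x)) hxy)

end PatienceSorting

section Piles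

variable {a : ℕ → ℕ} {PS : List (List ℕ)} {I : Finset ℕ}

lemma eq_of_mem_of_nodup_flatten (hnd : PS.flatten.Nodup) {s s' : ℕ} {q q' : List ℕ} {x : ℕ}
    (hs : PS[s]? = some q) (hs' : PS[s']? = some q') (hx : x ∈ q) (hx' : x ∈ q') : s = s' := by
  have hdisj := (List.nodup_flatten.1 hnd).2
  by_contra hne
  rcases lt_or_gt_of_ne hne with hlt | hlt
  · exact hdisj.rel_of_getElem? hs hs' hlt hx hx'
  · exact hdisj.rel_of_getElem? hs' hs hlt hx' hx

lemma exists_getElem?_findIdx_of_mem_flatten {x : ℕ} (hx : x ∈ PS.flatten) :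
    ∃ q, PS[PS.findIdx (x ∈ ·)]? = some q ∧ x ∈ q := by
  obtain ⟨q, hq, hxq⟩ := List.mem_flatten.1 hx
  have h : PS.findIdx (x ∈ ·) < PS.length :=
    List.findIdx_lt_length.2 ⟨q, hq, by simpa using hxq⟩
  exact ⟨_, List.getElem?_eq_getElem h, by simpa using List.findIdx_getElem (w := h)⟩

namespace PilesInv

lemma isInversion (hPS : PilesInv a PS) {q : List ℕ} (hq : q ∈ PS) {x y : ℕ} (hx : x ∈ q)
    (hy : y ∈ q) (hxy : x ≠ y) : IsInversion a x y := by
  have : Std.Symm (IsInversion a) := ⟨fun _ _ => isInversion_comm.1⟩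
  have hinv : q.Pairwise (IsInversion a) := (hPS.chain q hq).imp Or.inr
  exact hinv.forall hx hy hxy

lemma exists_lt_of_lt (hPS : PilesInv a PS) {s s' : ℕ} {q q' : List ℕ} (hs : PS[s]? = some q)
    (hs' : PS[s']? = some q') (hlt : s < s') {x : ℕ} (hx : x ∈ q') :
    ∃ y ∈ q, y < x ∧ a y < a x :=
  hPS.back.rel_of_getElem? hs hs' hlt x hx

lemma length_le_two (hPS : PilesInv a PS) {n : ℕ} (hbip : (permGraph a n).Colorable 2)
    (hmem : ∀ x ∈ PS.flatten, x ∈ Finset.Icc 1 n) {q : List ℕ} (hq : q ∈ PS) :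
    q.length ≤ 2 := by
  by_contra! h
  obtain ⟨x, y, z, w, rfl⟩ : ∃ x y z w, q = x :: y :: z :: w := by
    match q, h with
    | x :: y :: z :: w, _ => exact ⟨x, y, z, w, rfl⟩
  have adj : ∀ {u v}, u ∈ x :: y :: z :: w → v ∈ x :: y :: z :: w →
      v < u ∧ a u < a v → (permGraph a n).Adj u v := fun hu hv h =>
    ⟨hmem _ (List.mem_flatten_of_mem hq hu), hmem _ (List.mem_flatten_of_mem hq hv), Or.inr h⟩
  have hc := hPS.chain _ hq
  simp only [List.pairwise_cons] at hc
  exact hbip.cliqueFree (by norm_num : 2 < 3) {x, y, z} (SimpleGraph.is3Clique_triple_iff.2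
    ⟨adj (by simp) (by simp) (hc.1 y (by simp)), adj (by simp) (by simp) (hc.1 z (by simp)),
      adj (by simp) (by simp) (hc.2.1 z (by simp))⟩)

lemma length_eq_two (hPS : PilesInv a PS) {n : ℕ} (hbip : (permGraph a n).Colorable 2)
    (hmem : ∀ x ∈ PS.flatten, x ∈ Finset.Icc 1 n) {q : List ℕ} (hq : q ∈ PS) {x y : ℕ}
    (hx : x ∈ q) (hy : y ∈ q) (hxy : x ≠ y) : q.length = 2 := by
  refine le_antisymm (hPS.length_le_two hbip hmem hq) ?_
  match q, hx, hy with
  | [], hx, _ => simp at hx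
  | [_], hx, hy => simp_all
  | _ :: _ :: _, _, _ => simp

lemma injOn_findIdx (hPS : PilesInv a PS) (hI : Feasible a I)
    (hsub : ∀ x ∈ I, x ∈ PS.flatten) : Set.InjOn (fun x => PS.findIdx (x ∈ ·)) I := by
  intro x hx y hy hxy
  obtain ⟨q, hq, hxq⟩ := exists_getElem?_findIdx_of_mem_flatten (hsub x hx)
  obtain ⟨q', hq', hyq⟩ := exists_getElem?_findIdx_of_mem_flatten (hsub y hy)
  rw [← show PS.findIdx (x ∈ ·) = PS.findIdx (y ∈ ·) from hxy, hq] at hq'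
  cases hq'
  by_contra hne
  exact hI.not_isInversion hx hy (hPS.isInversion (List.mem_of_getElem? hq) hxq hyq hne)

lemma mapsTo_findIdx (hsub : ∀ x ∈ I, x ∈ PS.flatten) :
    Set.MapsTo (fun x => PS.findIdx (x ∈ ·)) I (Finset.range PS.length) := by
  intro x hx
  obtain ⟨q, hq, -⟩ := exists_getElem?_findIdx_of_mem_flatten (hsub x hx)
  exact Finset.mem_range.2 (List.getElem?_eq_some_iff.1 hq).1

lemma card_le_length (hPS : PilesInv a PS) (hI : Feasible a I)
    (hsub : ∀ x ∈ I, x ∈ PS.flatten) : I.card ≤ PS.length := by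
  simpa using Finset.card_le_card_of_injOn _ (mapsTo_findIdx hsub) (hPS.injOn_findIdx hI hsub)

lemma exists_mem_of_length_le (hPS : PilesInv a PS) (hI : Feasible a I)
    (hsub : ∀ x ∈ I, x ∈ PS.flatten) (hlen : PS.length ≤ I.card) {s : ℕ} {q : List ℕ}
    (hs : PS[s]? = some q) : ∃ x ∈ I, x ∈ q := by
  obtain ⟨x, hx, hxs⟩ := Finset.surjOn_of_injOn_of_card_le _ (mapsTo_findIdx hsub)
    (hPS.injOn_findIdx hI hsub) (by simpa using hlen)
    (Finset.mem_range.2 (List.getElem?_eq_some_iff.1 hs).1)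
  obtain ⟨q', hq', hxq'⟩ := exists_getElem?_findIdx_of_mem_flatten (hsub x hx)
  rw [show PS.findIdx (x ∈ ·) = s from hxs, hs] at hq'
  cases hq'
  exact ⟨x, hx, hxq'⟩

lemma exists_feasible (hPS : PilesInv a PS) : ∀ {s : ℕ} {q : List ℕ} {x : ℕ},
    PS[s]? = some q → x ∈ q → ∃ S : Finset ℕ, S.card = s + 1 ∧ Feasible a S ∧
      (∀ y ∈ S, y ∈ PS.flatten) ∧ ∀ y ∈ S, y ≤ x ∧ a y ≤ a x
  | 0, q, x, hs, hx => ⟨{x}, rfl, by simp [Feasible],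
      by simpa using List.mem_flatten_of_mem (List.mem_of_getElem? hs) hx, by simp⟩
  | s + 1, q, x, hs, hx => by
    have hlt : s < PS.length := by have := (List.getElem?_eq_some_iff.1 hs).1; omega
    obtain ⟨y, hy, hyx, hayx⟩ :=
      hPS.exists_lt_of_lt (List.getElem?_eq_getElem hlt) hs (Nat.lt_succ_self s) hx
    obtain ⟨S, hcard, hSf, hSsub, hSle⟩ := hPS.exists_feasible (List.getElem?_eq_getElem hlt) hy
    have hSlt : ∀ z ∈ S, z < x ∧ a z < a x :=
      fun z hz => ⟨(hSle z hz).1.trans_lt hyx, (hSle z hz).2.trans_lt hayx⟩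
    refine ⟨insert x S, ?_, hSf.insert_of_lt hSlt, ?_, ?_⟩
    · rw [Finset.card_insert_of_notMem fun h => (hSlt x h).1.false, hcard]
    · simp only [Finset.mem_insert, forall_eq_or_imp]
      exact ⟨List.mem_flatten_of_mem (List.mem_of_getElem? hs) hx, hSsub⟩
    · simp only [Finset.mem_insert, forall_eq_or_imp, le_refl, and_self, true_and]
      exact fun z hz => ⟨(hSlt z hz).1.le, (hSlt z hz).2.le⟩

lemma card_eq_length (hPS : PilesInv a PS) {n : ℕ}
    (hmem : ∀ x, x ∈ PS.flatten ↔ x ∈ Finset.Icc 1 n) (hI : MaxFeasibleIcc a n I) :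
    I.card = PS.length := by
  refine le_antisymm (hPS.card_le_length hI.2.1 fun x hx => (hmem x).2 (hI.1 hx)) ?_
  rcases Nat.eq_zero_or_pos PS.length with h | h
  · omega
  have hlast : PS.length - 1 < PS.length := by omega
  obtain ⟨x, hx⟩ := List.exists_mem_of_ne_nil _ (hPS.ne_nil _ (List.getElem_mem hlast))
  obtain ⟨S, hcard, hSf, hSsub, -⟩ := hPS.exists_feasible (List.getElem?_eq_getElem hlast) hx
  have := hI.2.2 S (fun y hy => (hmem y).1 (hSsub y hy)) hSf
  omega

lemma exists_mem_of_maxFeasibleIcc (hPS : PilesInv a PS) {n : ℕ}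
    (hmem : ∀ x, x ∈ PS.flatten ↔ x ∈ Finset.Icc 1 n) (hI : MaxFeasibleIcc a n I) {s : ℕ}
    {q : List ℕ} (hs : PS[s]? = some q) : ∃ x ∈ I, x ∈ q :=
  hPS.exists_mem_of_length_le hI.2.1 (fun x hx => (hmem x).2 (hI.1 hx))
    (hPS.card_eq_length hmem hI).ge hs

end PilesInv

end Piles

abbrev patiencePiles (a : ℕ → ℕ) (n : ℕ) : List (List ℕ) :=
  pilesOf a ((List.range n).map (· + 1))

section PatiencePiles

variable {a : ℕ → ℕ} {n : ℕ}

lemma mem_flatten_patiencePiles {x : ℕ} :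
    x ∈ (patiencePiles a n).flatten ↔ x ∈ Finset.Icc 1 n := by
  rw [(flatten_pilesOf_perm _).mem_iff]
  simp only [List.mem_map, List.mem_range, Finset.mem_Icc]
  constructor
  · rintro ⟨y, hy, rfl⟩
    omega
  · exact fun h => ⟨x - 1, by omega, by omega⟩

lemma nodup_flatten_patiencePiles : (patiencePiles a n).flatten.Nodup :=
  (flatten_pilesOf_perm _).nodup_iff.2 (List.nodup_range.map (add_left_injective 1))

lemma pilesInv_patiencePiles
    (hinj : ∀ i ∈ Finset.Icc 1 n, ∀ j ∈ Finset.Icc 1 n, a i = a j → i = j) :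
    PilesInv a (patiencePiles a n) := by
  refine pilesInv_pilesOf (List.pairwise_map.2 (List.pairwise_lt_range.imp (by omega)))
    fun x hx y hy hxy => hinj x ?_ y ?_ hxy
  all_goals simp only [Set.mem_ofPred_eq, List.mem_map, List.mem_range] at hx hy
  all_goals rw [Finset.mem_Icc]; omega

lemma ne_of_mem_of_ne {t t' : ℕ} {p p' : List ℕ} (hp : (patiencePiles a n)[t]? = some p)
    (hp' : (patiencePiles a n)[t']? = some p') (htt' : t ≠ t') {x y : ℕ} (hx : x ∈ p)
    (hy : y ∈ p') : x ≠ y := by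
  rintro rfl
  exact htt' (eq_of_mem_of_nodup_flatten nodup_flatten_patiencePiles hp hp' hx hy)

lemma length_eq_two_of_mem
    (hinj : ∀ i ∈ Finset.Icc 1 n, ∀ j ∈ Finset.Icc 1 n, a i = a j → i = j)
    (hbip : (permGraph a n).Colorable 2) {t : ℕ} {p : List ℕ}
    (hp : (patiencePiles a n)[t]? = some p) {x y : ℕ} (hx : x ∈ p) (hy : y ∈ p)
    (hxy : x ≠ y) : p.length = 2 :=
  (pilesInv_patiencePiles hinj).length_eq_two hbip (fun _ => mem_flatten_patiencePiles.1)
    (List.mem_of_getElem? hp) hx hy hxy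

end PatiencePiles

lemma mixedPile_comm {I J : Finset ℕ} {q : List ℕ} (h : MixedPile I J q) : MixedPile J I q := by
  obtain ⟨hl, x, y, hxy, hx, hy, hxI, hyJ⟩ := h
  exact ⟨hl, y, x, hxy.symm, hy, hx, hyJ, hxI⟩

lemma hasForbiddenPair_comm {a : ℕ → ℕ} {n : ℕ} {I J : Finset ℕ}
    (h : HasForbiddenPair a n J I) : HasForbiddenPair a n I J := by
  obtain ⟨t, t', htt', p, p', hp, hp', x, y, x', y', ⟨h1, h2, h3, h4, h5, h6⟩,
    ⟨g1, g2, g3, g4, g5, g6⟩, hxx', hyy', e1, e2, e3, e4, n1, n2⟩ := h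
  exact ⟨t, t', htt', p, p', hp, hp', y, x, y', x', ⟨h1.symm, h3, h2, h5, h4, h6⟩,
    ⟨g1.symm, g3, g2, g5, g4, g6⟩, hyy', hxx', e1.symm, e4.symm, e3.symm, e2.symm, n2, n1⟩

section Exchange

variable {a : ℕ → ℕ} {n : ℕ} {I J : Finset ℕ} {t : ℕ} {p : List ℕ} {i j : ℕ}

lemma hasForbiddenPair_of_cycle
    (hinj : ∀ i ∈ Finset.Icc 1 n, ∀ j ∈ Finset.Icc 1 n, a i = a j → i = j)
    (hbip : (permGraph a n).Colorable 2) (hI : MaxFeasibleIcc a n I)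
    (hJ : MaxFeasibleIcc a n J) ⦃t t' : ℕ⦄ ⦃p p' : List ℕ⦄ (htt' : t ≠ t')
    (hp : (patiencePiles a n)[t]? = some p) (hp' : (patiencePiles a n)[t']? = some p')
    {x y x' y' : ℕ} (hx : x ∈ p) (hy : y ∈ p) (hx' : x' ∈ p') (hy' : y' ∈ p')
    (hxI : x ∈ I) (hyJ : y ∈ J) (hx'I : x' ∈ I) (hy'J : y' ∈ J) (hxy : x ≠ y)
    (hx'y' : x' ≠ y') (hyx' : IsInversion a y x') (hy'x : IsInversion a y' x) :
    HasForbiddenPair a n I J := by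
  have hPS := pilesInv_patiencePiles hinj
  exact ⟨t, t', htt', p, p', hp, hp', x, y, x', y',
    ⟨hxy, hx, hy, hxI, hyJ, length_eq_two_of_mem hinj hbip hp hx hy hxy⟩,
    ⟨hx'y', hx', hy', hx'I, hy'J, length_eq_two_of_mem hinj hbip hp' hx' hy' hx'y'⟩,
    ne_of_mem_of_ne hp hp' htt' hx hx', ne_of_mem_of_ne hp hp' htt' hy hy',
    ⟨hI.1 hxI, hJ.1 hyJ, hPS.isInversion (List.mem_of_getElem? hp) hx hy hxy⟩,
    ⟨hJ.1 hyJ, hI.1 hx'I, hyx'⟩,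
    ⟨hI.1 hx'I, hJ.1 hy'J, hPS.isInversion (List.mem_of_getElem? hp') hx' hy' hx'y'⟩,
    ⟨hJ.1 hy'J, hI.1 hxI, hy'x⟩,
    fun h => hI.2.1.not_isInversion hxI hx'I h.2.2,
    fun h => hJ.2.1.not_isInversion hyJ hy'J h.2.2⟩

lemma lt_of_mem_sdiff
    (hinj : ∀ i ∈ Finset.Icc 1 n, ∀ j ∈ Finset.Icc 1 n, a i = a j → i = j)
    (hbip : (permGraph a n).Colorable 2) (hI : MaxFeasibleIcc a n I)
    (hJ : MaxFeasibleIcc a n J)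
    (hleft : ∀ s < t, ∀ q : List ℕ, (patiencePiles a n)[s]? = some q → ¬ MixedPile I J q)
    (hp : (patiencePiles a n)[t]? = some p) (hi : i ∈ p) (hiI : i ∈ I) {s x : ℕ}
    {q : List ℕ} (hq : (patiencePiles a n)[s]? = some q) (hx : x ∈ q) (hxI : x ∈ I)
    (hxJ : x ∉ J) (hxi : x ≠ i) : t < s := by
  have hPS := pilesInv_patiencePiles hinj
  rcases lt_trichotomy s t with hst | rfl | hts
  · obtain ⟨y, hyJ, hyq⟩ :=
      hPS.exists_mem_of_maxFeasibleIcc (fun _ => mem_flatten_patiencePiles) hJ hq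
    have hxy : x ≠ y := by
      rintro rfl
      exact hxJ hyJ
    exact absurd ⟨length_eq_two_of_mem hinj hbip hq hx hyq hxy, x, y, hxy, hx, hyq, hxI, hyJ⟩
      (hleft s hst q hq)
  · rw [hp] at hq
    cases hq
    exact absurd (hPS.isInversion (List.mem_of_getElem? hp) hx hi hxi)
      (hI.2.1.not_isInversion hxI hiI)
  · exact hts

lemma hasForbiddenPair_of_crossing
    (hinj : ∀ i ∈ Finset.Icc 1 n, ∀ j ∈ Finset.Icc 1 n, a i = a j → i = j)
    (hbip : (permGraph a n).Colorable 2) (hI : MaxFeasibleIcc a n I)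
    (hJ : MaxFeasibleIcc a n J) (hp : (patiencePiles a n)[t]? = some p) (hi : i ∈ p)
    (hj : j ∈ p) (hiI : i ∈ I) (hjJ : j ∈ J) {sk sl k l : ℕ} {qk ql : List ℕ}
    (hqk : (patiencePiles a n)[sk]? = some qk) (hkq : k ∈ qk) (hkI : k ∈ I) (hkJ : k ∉ J)
    (hql : (patiencePiles a n)[sl]? = some ql) (hlq : l ∈ ql) (hlJ : l ∈ J) (hlI : l ∉ I)
    (htk : t < sk) (htl : t < sl)
    (hord : i < k ∧ k < j ∧ j < l ∧ a j < a l ∧ a l < a i ∧ a i < a k) :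
    HasForbiddenPair a n I J := by
  have hPS := pilesInv_patiencePiles hinj
  have hmem : ∀ x, x ∈ (patiencePiles a n).flatten ↔ x ∈ Finset.Icc 1 n :=
    fun _ => mem_flatten_patiencePiles
  have cycle := hasForbiddenPair_of_cycle hinj hbip hI hJ
  by_cases hkl : sk = sl
  · subst hkl
    rw [hqk] at hql
    cases hql
    exact cycle htk.ne hp hqk hi hj hkq hlq hiI hjJ hkI hlJ (by omega) (by omega)
      (Or.inr (by omega)) (Or.inr (by omega))
  obtain ⟨k', hk'J, hk'q⟩ := hPS.exists_mem_of_maxFeasibleIcc hmem hJ hqk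
  obtain ⟨l', hl'I, hl'q⟩ := hPS.exists_mem_of_maxFeasibleIcc hmem hI hql
  have hkk' : k ≠ k' := by rintro rfl; exact hkJ hk'J
  have hll' : l ≠ l' := by rintro rfl; exact hlI hl'I
  have hk' := hPS.isInversion (List.mem_of_getElem? hqk) hkq hk'q hkk'
  have hl' := hPS.isInversion (List.mem_of_getElem? hql) hlq hl'q hll'
  have hak'i : a k' ≠ a i := fun h =>
    ne_of_mem_of_ne hqk hp htk.ne' hk'q hi (hinj _ (hJ.1 hk'J) _ (hI.1 hiI) h)
  have := hJ.2.1 k' hk'J j hjJ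
  have := hJ.2.1 k' hk'J l hlJ
  have := hI.2.1 i hiI l' hl'I
  have := hI.2.1 k hkI l' hl'I
  simp only [IsInversion] at hk' hl'
  rcases hak'i.lt_or_gt with hk'i | hik'
  · exact cycle htk.ne hp hqk hi hj hkq hk'q hiI hjJ hkI hk'J (by omega) hkk'
      (by unfold IsInversion; omega) (by unfold IsInversion; omega)
  rcases (ne_of_mem_of_ne hql hp htl.ne' hl'q hj).lt_or_gt with hl'j | hjl'
  · exact cycle htl.ne hp hql hi hj hl'q hlq hiI hjJ hl'I hlJ (by omega) hll'.symm
      (by unfold IsInversion; omega) (by unfold IsInversion; omega)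
  · exact cycle hkl hqk hql hkq hk'q hl'q hlq hkI hk'J hl'I hlJ hkk' hll'.symm
      (by unfold IsInversion; omega) (by unfold IsInversion; omega)

lemma feasible_exchange_of_lt
    (hinj : ∀ i ∈ Finset.Icc 1 n, ∀ j ∈ Finset.Icc 1 n, a i = a j → i = j)
    (hbip : (permGraph a n).Colorable 2) (hI : MaxFeasibleIcc a n I)
    (hJ : MaxFeasibleIcc a n J) (hnofp : ¬ HasForbiddenPair a n I J)
    (hp : (patiencePiles a n)[t]? = some p)
    (hleft : ∀ s < t, ∀ q : List ℕ, (patiencePiles a n)[s]? = some q → ¬ MixedPile I J q)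
    (hi : i ∈ p) (hj : j ∈ p) (hiI : i ∈ I) (hjJ : j ∈ J) (hij : i < j) :
    Feasible a (insert j (I \ {i})) ∨ Feasible a (insert i (J \ {j})) := by
  have hPS := pilesInv_patiencePiles hinj
  have hmem : ∀ x, x ∈ (patiencePiles a n).flatten ↔ x ∈ Finset.Icc 1 n :=
    fun _ => mem_flatten_patiencePiles
  by_contra! h
  obtain ⟨k, hk, hjk⟩ := (hI.2.1.mono Finset.sdiff_subset).exists_isInversion_of_not_insert
    (fun k hk => hinj k (hI.1 (Finset.sdiff_subset hk)) j (hJ.1 hjJ)) h.1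
  obtain ⟨l, hl, hil⟩ := (hJ.2.1.mono Finset.sdiff_subset).exists_isInversion_of_not_insert
    (fun l hl => hinj l (hJ.1 (Finset.sdiff_subset hl)) i (hI.1 hiI)) h.2
  rw [Finset.mem_sdiff, Finset.mem_singleton] at hk hl
  have hkJ : k ∉ J := fun hkJ => hJ.2.1.not_isInversion hjJ hkJ hjk
  have hlI : l ∉ I := fun hlI => hI.2.1.not_isInversion hiI hlI hil
  obtain ⟨qk, hqk, hkq⟩ := exists_getElem?_findIdx_of_mem_flatten ((hmem k).2 (hI.1 hk.1))
  obtain ⟨ql, hql, hlq⟩ := exists_getElem?_findIdx_of_mem_flatten ((hmem l).2 (hJ.1 hl.1))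
  have htk := lt_of_mem_sdiff hinj hbip hI hJ hleft hp hi hiI hqk hkq hk.1 hkJ hk.2
  have htl := lt_of_mem_sdiff hinj hbip hJ hI
    (fun s hs q hq hm => hleft s hs q hq (mixedPile_comm hm)) hp hj hjJ hql hlq hl.1 hlI hl.2
  have hji := hPS.isInversion (List.mem_of_getElem? hp) hj hi hij.ne'
  have hlen := length_eq_two_of_mem hinj hbip hp hi hj hij.ne
  obtain ⟨y, hy, hyk⟩ := hPS.exists_lt_of_lt hp hqk htk hkq
  obtain ⟨z, hz, hzl⟩ := hPS.exists_lt_of_lt hp hql htl hlq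
  simp only [IsInversion] at hjk hil hji
  have hord : i < k ∧ k < j ∧ j < l ∧ a j < a l ∧ a l < a i ∧ a i < a k := by
    rcases List.eq_or_eq_of_length_eq_two hlen hij.ne hi hj hy with rfl | rfl <;>
    rcases List.eq_or_eq_of_length_eq_two hlen hij.ne hi hj hz with rfl | rfl <;> omega
  exact hnofp (hasForbiddenPair_of_crossing hinj hbip hI hJ hp hi hj hiI hjJ hqk hkq hk.1 hkJ
    hql hlq hl.1 hlI htk htl hord)

end Exchange

theorem stmt14_general (n : ℕ) (a : ℕ → ℕ)
    (hinj : ∀ i ∈ Finset.Icc 1 n, ∀ j ∈ Finset.Icc 1 n, a i = a j → i = j)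
    (hbip : (permGraph a n).Colorable 2)
    (I J : Finset ℕ) (hI : MaxFeasibleIcc a n I) (hJ : MaxFeasibleIcc a n J)
    (hnofp : ¬ HasForbiddenPair a n I J)
    (t : ℕ) (p : List ℕ)
    (hp : (pilesOf a ((List.range n).map (· + 1)))[t]? = some p)
    (hleft : ∀ s < t, ∀ q : List ℕ,
      (pilesOf a ((List.range n).map (· + 1)))[s]? = some q →
        ¬ MixedPile I J q)
    (i j : ℕ) (hij : i ≠ j) (hi : i ∈ p) (hj : j ∈ p)
    (hiI : i ∈ I) (hjJ : j ∈ J) :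
    Feasible a (insert j (I \ {i})) ∨ Feasible a (insert i (J \ {j})) := by
  rcases hij.lt_or_gt with hlt | hgt
  · exact feasible_exchange_of_lt hinj hbip hI hJ hnofp hp hleft hi hj hiI hjJ hlt
  · exact (feasible_exchange_of_lt hinj hbip hJ hI (hnofp ∘ hasForbiddenPair_comm) hp
      (fun s hs q hq hm => hleft s hs q hq (mixedPile_comm hm)) hj hi hjJ hiI hgt).symm

/-- Let `a₁, …, aₙ` be distinct integers between `1` and `n` whose permutation
graph is bipartite, and let `I`, `J` be maximum feasible sets such that the
instance `(A, I, J)` has no forbidden pair.  If `a i` and `a j` are the two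
elements of the leftmost mixed pile, with `i ∈ I` and `j ∈ J`, then at least
one of `(I \ {i}) ∪ {j}` and `(J \ {j}) ∪ {i}` is a feasible set. -/
theorem stmt14 (n : ℕ) (a : ℕ → ℕ) (hn : 0 < n)
    (hmem : ∀ i ∈ Finset.Icc 1 n, a i ∈ Finset.Icc 1 n)
    (hinj : ∀ i ∈ Finset.Icc 1 n, ∀ j ∈ Finset.Icc 1 n, a i = a j → i = j)
    (hbip : (permGraph a n).Colorable 2)
    (I J : Finset ℕ) (hI : MaxFeasibleIcc a n I) (hJ : MaxFeasibleIcc a n J)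
    (hnofp : ¬ HasForbiddenPair a n I J)
    (t : ℕ) (p : List ℕ)
    (hp : (pilesOf a ((List.range n).map (· + 1)))[t]? = some p)
    (hmix : MixedPile I J p)
    (hleft : ∀ s < t, ∀ q : List ℕ,
      (pilesOf a ((List.range n).map (· + 1)))[s]? = some q →
        ¬ MixedPile I J q)
    (i j : ℕ) (hij : i ≠ j) (hi : i ∈ p) (hj : j ∈ p)
    (hiI : i ∈ I) (hjJ : j ∈ J) :
    Feasible a (insert j (I \ {i})) ∨ Feasible a (insert i (J \ {j})) :=
  stmt14_general n a hinj hbip I J hI hJ hnofp t p hp hleft i j hij hi hj hiI hjJ
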